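/- arXiv:2506.11205 — 3 statements merged into one kernel-verified Lean document; each statement's English description precedes it below -/
import Mathlib

section
/- Let X be a set and Δ: X × X → [0,∞) a semi-metric (Δ(x,y)=0 iff x=y, and Δ is symmetric). Suppose there exist α ∈ (0,1) and c ≥ 0 such that Δ(x,y) ≤ Δ(x,z) + Δ(z,y) + c·(Δ(x,z))^α·(Δ(z,y))^{1-α} for all x,y,z ∈ X (i.e., Δ is an (α,c)-interpolative metric). Then Δ is a b-metric with coefficient s = max{1 + cα, 1 + c(1-α)}, i.e., Δ(x,y) ≤ s(Δ(x,z) + Δ(z,y)) for all x,y,z ∈ X. -/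
lemma mul_add_mul_le_max_mul_add {p q a b : ℝ} (ha : 0 ≤ a) (hb : 0 ≤ b) :
    p * a + q * b ≤ max p q * (a + b) := by
  have hp : p * a ≤ max p q * a := mul_le_mul_of_nonneg_right (le_max_left p q) ha
  have hq : q * b ≤ max p q * b := mul_le_mul_of_nonneg_right (le_max_right p q) hb
  linarith

lemma add_add_mul_rpow_mul_rpow_le {a b α c : ℝ} (ha : 0 ≤ a) (hb : 0 ≤ b)
    (hα₀ : 0 ≤ α) (hα₁ : α ≤ 1) (hc : 0 ≤ c) :
    a + b + c * a ^ α * b ^ (1 - α) ≤ max (1 + c * α) (1 + c * (1 - α)) * (a + b) := by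
  have young : a ^ α * b ^ (1 - α) ≤ α * a + (1 - α) * b :=
    Real.geom_mean_le_arith_mean2_weighted hα₀ (by linarith) ha hb (by ring)
  calc a + b + c * a ^ α * b ^ (1 - α)
      = a + b + c * (a ^ α * b ^ (1 - α)) := by ring
    _ ≤ a + b + c * (α * a + (1 - α) * b) := by gcongr
    _ = (1 + c * α) * a + (1 + c * (1 - α)) * b := by ring
    _ ≤ max (1 + c * α) (1 + c * (1 - α)) * (a + b) := mul_add_mul_le_max_mul_add ha hb

theorem interpolative_is_b_metric_general {X : Type*} (Δ : X → X → ℝ)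
    (h_nonneg : ∀ x y, 0 ≤ Δ x y)
    (α c : ℝ) (hα : 0 < α ∧ α < 1) (hc : 0 ≤ c)
    (h_interp : ∀ x y z, Δ x y ≤ Δ x z + Δ z y + c * (Δ x z) ^ α * (Δ z y) ^ (1 - α)) :
    ∀ x y z, Δ x y ≤ max (1 + c * α) (1 + c * (1 - α)) * (Δ x z + Δ z y) := fun x y z =>
  (h_interp x y z).trans <|
    add_add_mul_rpow_mul_rpow_le (h_nonneg x z) (h_nonneg z y) hα.1.le hα.2.le hc

theorem interpolative_is_b_metric {X : Type*} (Δ : X → X → ℝ)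
    (h_nonneg : ∀ x y, 0 ≤ Δ x y)
    (h_eq : ∀ x y, Δ x y = 0 ↔ x = y)
    (h_symm : ∀ x y, Δ x y = Δ y x)
    (α c : ℝ) (hα : 0 < α ∧ α < 1) (hc : 0 ≤ c)
    (h_interp : ∀ x y z, Δ x y ≤ Δ x z + Δ z y + c * (Δ x z) ^ α * (Δ z y) ^ (1 - α)) :
    ∀ x y z, Δ x y ≤ max (1 + c * α) (1 + c * (1 - α)) * (Δ x z + Δ z y) :=
  interpolative_is_b_metric_general Δ h_nonneg α c hα hc h_interp
end

section
/- Every strong b-suprametric Δ (satisfying Δ(x,y) ≤ sΔ(x,z) + Δ(z,y) + c·Δ(x,z)·Δ(z,y) for some s ≥ 1, c ≥ 0) is jointly continuous: if Δ(xₙ,x) → 0 and Δ(yₙ,y) → 0, then Δ(xₙ,yₙ) → Δ(x,y). -/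
theorem strong_b_suprametric_jointly_continuous {X : Type*} (Δ : X → X → ℝ) (s c : ℝ)
    (hs : 1 ≤ s) (hc : 0 ≤ c)
    (h_nonneg : ∀ x y, 0 ≤ Δ x y)
    (h_eq : ∀ x y, Δ x y = 0 ↔ x = y)
    (h_symm : ∀ x y, Δ x y = Δ y x)
    (h_strong : ∀ x y z, Δ x y ≤ s * Δ x z + Δ z y + c * Δ x z * Δ z y)
    (u v : ℕ → X) (x y : X)
    (hu : Filter.Tendsto (fun n => Δ (u n) x) Filter.atTop (nhds 0))
    (hv : Filter.Tendsto (fun n => Δ (v n) y) Filter.atTop (nhds 0)) :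
    Filter.Tendsto (fun n => Δ (u n) (v n)) Filter.atTop (nhds (Δ x y)) := by
  set a : ℕ → ℝ := fun n => Δ (u n) x with ha
  set b : ℕ → ℝ := fun n => Δ (v n) y with hb
  set d : ℝ := Δ x y with hd
  -- upper bound
  have hU : ∀ n, Δ (u n) (v n) ≤ s * a n + (1 + c * a n) * (s * b n + d + c * b n * d) := by
    intro n
    have h1 := h_strong (u n) (v n) x
    have h2 := h_strong (v n) x y
    rw [h_symm x (v n)] at h1
    rw [h_symm y x] at h2
    have han : 0 ≤ a n := h_nonneg _ _
    have hbn : 0 ≤ b n := h_nonneg _ _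
    have hP : 0 ≤ Δ (v n) x := h_nonneg _ _
    nlinarith [mul_nonneg hc han, mul_nonneg (mul_nonneg hc han) hP]
  -- lower bound
  have hL : ∀ n, (d - s * a n - (1 + c * a n) * (s * b n)) / ((1 + c * a n) * (1 + c * b n))
      ≤ Δ (u n) (v n) := by
    intro n
    have han : 0 ≤ a n := h_nonneg _ _
    have hbn : 0 ≤ b n := h_nonneg _ _
    have hDpos : 0 < (1 + c * a n) * (1 + c * b n) := by positivity
    rw [div_le_iff₀ hDpos]
    have h1 := h_strong x y (u n)
    have h2 := h_strong y (u n) (v n)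
    rw [h_symm x (u n)] at h1
    rw [h_symm y (u n), h_symm y (v n), h_symm (v n) (u n)] at h2
    have ht : 0 ≤ Δ (u n) (v n) := h_nonneg _ _
    nlinarith [mul_nonneg hc han, mul_nonneg (mul_nonneg hc han) ht,
      mul_nonneg (mul_nonneg hc han) hbn]
  have hab : Filter.Tendsto (fun n => (a n, b n)) Filter.atTop (nhds ((0 : ℝ), (0 : ℝ))) :=
    hu.prodMk_nhds hv
  have hUt : Filter.Tendsto (fun n => s * a n + (1 + c * a n) * (s * b n + d + c * b n * d))
      Filter.atTop (nhds d) := by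
    have hf : ContinuousAt (fun p : ℝ × ℝ => s * p.1 + (1 + c * p.1) * (s * p.2 + d + c * p.2 * d))
        (0, 0) := by fun_prop
    have := hf.tendsto.comp hab
    simp only [Function.comp] at this
    simpa [Function.comp_def] using this
  have hLt : Filter.Tendsto
      (fun n => (d - s * a n - (1 + c * a n) * (s * b n)) / ((1 + c * a n) * (1 + c * b n)))
      Filter.atTop (nhds d) := by
    have hf : ContinuousAt (fun p : ℝ × ℝ =>
        (d - s * p.1 - (1 + c * p.1) * (s * p.2)) / ((1 + c * p.1) * (1 + c * p.2))) (0, 0) := by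
      apply ContinuousAt.div
      · fun_prop
      · fun_prop
      · norm_num
    have := hf.tendsto.comp hab
    simp only [Function.comp] at this
    simpa [Function.comp_def] using this
  exact tendsto_of_tendsto_of_tendsto_of_le_of_le hLt hUt hL hU
end

section
/- Let (X, Δ) be a b-suprametric space with constants s ≥ 1, c ≥ 0, θ ∈ Θ₁, and T: X → X satisfying Δ(Tx,Ty) ≤ θ(max{Δ(x,y), Δ(x,Tx), Δ(y,Ty)}) for all x,y. Suppose {Tⁿx} converges to some z ∈ X with Δ(Tⁿx, z) → 0 and Δ(Tⁿx, T^{n+1}x) → 0, and suppose Δ is separately continuous. Then z is a fixed point of T. -/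
/-! If `T z ≠ z`, then for `n` large every term of the maximum in the contractive condition
at `(Tⁿ x, z)` is at most `d = Δ(z, Tz)`, so `Δ(Tz, Tⁿ⁺¹ x) ≤ θ d`. Separate continuity lets `n → ∞`, giving
`d ≤ θ d`, which is impossible since the iterates of `θ` tend to `0`. -/

open Filter Topology Set

theorem le_iterate_of_le_of_monotoneOn {θ : ℝ → ℝ} (hθ : MonotoneOn θ (Ici 0)) {t : ℝ}
    (ht : 0 ≤ t) (h : t ≤ θ t) (n : ℕ) : t ≤ θ^[n] t := by
  induction n with
  | zero => exact le_rfl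
  | succ n ih =>
    rw [Function.iterate_succ_apply']
    exact h.trans (hθ ht (ht.trans ih) ih)

theorem lt_self_of_tendsto_iterate_zero {θ : ℝ → ℝ} (hθ : MonotoneOn θ (Ici 0)) {t : ℝ}
    (ht : 0 < t) (h : Tendsto (fun n => θ^[n] t) atTop (𝓝 0)) : θ t < t := by
  by_contra! hle
  have := ge_of_tendsto' h (le_iterate_of_le_of_monotoneOn hθ ht.le hle)
  linarith

theorem apply_le_of_le_displacement {X : Type*} {Δ : X → X → ℝ} {θ : ℝ → ℝ} {T : X → X}
    (h_nonneg : ∀ x y, 0 ≤ Δ x y) (hθ : MonotoneOn θ (Ici 0))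
    (h_contr : ∀ x y, Δ (T x) (T y) ≤ θ (max (Δ x y) (max (Δ x (T x)) (Δ y (T y)))))
    {p z : X} (hpz : Δ p z ≤ Δ z (T z)) (hp : Δ p (T p) ≤ Δ z (T z)) :
    Δ (T p) (T z) ≤ θ (Δ z (T z)) :=
  (h_contr p z).trans <| hθ (le_max_of_le_left (h_nonneg p z)) (h_nonneg z (T z))
    (max_le hpz (max_le hp le_rfl))

theorem limit_is_fixed_point_sep_cont_general {X : Type*} (Δ : X → X → ℝ)
    (h_nonneg : ∀ x y, 0 ≤ Δ x y)
    (h_eq : ∀ x y, Δ x y = 0 ↔ x = y)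
    (h_symm : ∀ x y, Δ x y = Δ y x)
    (θ : ℝ → ℝ)
    (hθ_mono : ∀ a b, 0 ≤ a → a ≤ b → θ a ≤ θ b)
    (hθ_iter : ∀ t, 0 < t → Filter.Tendsto (fun n => θ^[n] t) Filter.atTop (nhds 0))
    (T : X → X)
    (h_contr : ∀ x y, Δ (T x) (T y) ≤ θ (max (Δ x y) (max (Δ x (T x)) (Δ y (T y)))))
    (x z : X)
    (h_lim : Filter.Tendsto (fun n => Δ (T^[n] x) z) Filter.atTop (nhds 0))
    (h_gap : Filter.Tendsto (fun n => Δ (T^[n] x) (T^[n + 1] x)) Filter.atTop (nhds 0))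
    (h_sep_cont : ∀ (u : ℕ → X) (y : X),
      Filter.Tendsto (fun n => Δ (u n) y) Filter.atTop (nhds 0) →
      ∀ w, Filter.Tendsto (fun n => Δ w (u n)) Filter.atTop (nhds (Δ w y))) :
    T z = z := by
  by_contra hne
  set d := Δ z (T z)
  have hθ : MonotoneOn θ (Ici 0) := fun a ha b _ hab => hθ_mono a b ha hab
  have hd : 0 < d := (h_nonneg z (T z)).lt_of_ne' (mt (h_eq z (T z)).1 (Ne.symm hne))
  have hθd : θ d < d := lt_self_of_tendsto_iterate_zero hθ hd (hθ_iter d hd)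
  have h_near : ∀ᶠ n in atTop, Δ (T z) (T^[n + 1] x) ≤ θ d := by
    filter_upwards [h_lim.eventually (ge_mem_nhds hd), h_gap.eventually (ge_mem_nhds hd)]
      with n h_close h_step
    rw [Function.iterate_succ_apply'] at h_step ⊢
    rw [h_symm]
    exact apply_le_of_le_displacement h_nonneg hθ h_contr h_close h_step
  have h_orbit : Tendsto (fun n => Δ (T^[n + 1] x) z) atTop (𝓝 0) :=
    h_lim.comp (tendsto_add_atTop_nat 1)
  have h_le : Δ (T z) z ≤ θ d := le_of_tendsto (h_sep_cont _ z h_orbit (T z)) h_near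
  rw [h_symm] at h_le
  exact lt_irrefl d (h_le.trans_lt hθd)

theorem limit_is_fixed_point_sep_cont {X : Type*} (Δ : X → X → ℝ) (s c : ℝ)
    (hs : 1 ≤ s) (hc : 0 ≤ c)
    (h_nonneg : ∀ x y, 0 ≤ Δ x y)
    (h_eq : ∀ x y, Δ x y = 0 ↔ x = y)
    (h_symm : ∀ x y, Δ x y = Δ y x)
    (h_supra : ∀ x y z, Δ x y ≤ s * (Δ x z + Δ z y) + c * Δ x z * Δ z y)
    (θ : ℝ → ℝ)
    (hθ_mono : ∀ a b, 0 ≤ a → a ≤ b → θ a ≤ θ b)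
    (hθ_nonneg : ∀ t, 0 ≤ t → 0 ≤ θ t)
    (hθ_iter : ∀ t, 0 < t → Filter.Tendsto (fun n => θ^[n] t) Filter.atTop (nhds 0))
    (T : X → X)
    (h_contr : ∀ x y, Δ (T x) (T y) ≤ θ (max (Δ x y) (max (Δ x (T x)) (Δ y (T y)))))
    (x z : X)
    (h_lim : Filter.Tendsto (fun n => Δ (T^[n] x) z) Filter.atTop (nhds 0))
    (h_gap : Filter.Tendsto (fun n => Δ (T^[n] x) (T^[n + 1] x)) Filter.atTop (nhds 0))
    (h_sep_cont : ∀ (u : ℕ → X) (y : X),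
      Filter.Tendsto (fun n => Δ (u n) y) Filter.atTop (nhds 0) →
      ∀ w, Filter.Tendsto (fun n => Δ w (u n)) Filter.atTop (nhds (Δ w y))) :
    T z = z :=
  limit_is_fixed_point_sep_cont_general Δ h_nonneg h_eq h_symm θ hθ_mono hθ_iter T h_contr x z h_lim
    h_gap h_sep_cont
end
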